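/- arXiv:1904.01526 — 2 statements merged into one kernel-verified Lean document; each statement's English description precedes it below -/
import Mathlib

section
/- Classical leftover-hash/privacy-amplification bound (collision-probability version): let X be a random variable on {0,1}^n with collision probability cp(X) = ∑_x P(x)² ≤ 2^{-k}, and let F be uniform over a two-universal family of hash functions from {0,1}^n to {0,1}^ℓ. Then the statistical distance between (F, F(X)) and (F, U_ℓ) (U_ℓ uniform on {0,1}^ℓ, independent of F) is at most (1/2)·√(2^{ℓ-k}). -/
/-- Classical leftover-hash / privacy-amplification bound (collision-probability
version): if `cp(X) ≤ 2^{-k}` and `F` is uniform over a two-universal family of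
hash functions from `{0,1}^n` to `{0,1}^ℓ`, then the statistical distance between
`(F, F(X))` and `(F, U_ℓ)` is at most `(1/2)·√(2^{ℓ-k})`. -/
theorem leftover_hash_lemma {n ℓ : ℕ} {F : Type*} [Fintype F] [Nonempty F]
    (eval : F → (Fin n → Bool) → (Fin ℓ → Bool))
    (htu : ∀ x y : Fin n → Bool, x ≠ y →
      ((Finset.univ.filter (fun f : F => eval f x = eval f y)).card : ℝ) /
        (Fintype.card F : ℝ) ≤ 1 / 2 ^ ℓ)
    (P : (Fin n → Bool) → ℝ) (hP : ∀ x, 0 ≤ P x) (hsum : ∑ x, P x = 1)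
    (k : ℝ) (hcp : ∑ x, (P x) ^ 2 ≤ (2 : ℝ) ^ (-k)) :
    (1 / 2) * ∑ f : F, ∑ y : Fin ℓ → Bool,
        |(1 / (Fintype.card F : ℝ)) *
            (∑ x ∈ Finset.univ.filter (fun x => eval f x = y), P x) -
          (1 / (Fintype.card F : ℝ)) * (1 / 2 ^ ℓ)| ≤
      (1 / 2) * Real.sqrt ((2 : ℝ) ^ ((ℓ : ℝ) - k)) := by
  classical
  set N : ℝ := (Fintype.card F : ℝ) with hNdef
  have hN0 : (0:ℝ) < N := by
    have := Fintype.card_pos (α := F)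
    simp only [hNdef]
    exact_mod_cast this
  have hM0 : (0:ℝ) < 2 ^ ℓ := by positivity
  set Q : F → (Fin ℓ → Bool) → ℝ :=
    fun f y => ∑ x ∈ Finset.univ.filter (fun x => eval f x = y), P x with hQdef
  have hQsum : ∀ f : F, ∑ y, Q f y = 1 := by
    intro f
    simpa [hQdef] using (Finset.sum_fiberwise Finset.univ (eval f) P).trans hsum
  have hcardY : (Fintype.card (Fin ℓ → Bool) : ℝ) = 2 ^ ℓ := by
    simp [Fintype.card_fun]
  -- collision sum bound
  have hS : ∑ f : F, ∑ y, (Q f y) ^ 2 ≤ N * (2:ℝ) ^ (-k) + N / 2 ^ ℓ := by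
    have expand : ∀ f : F, ∑ y, (Q f y) ^ 2
        = ∑ x, ∑ x', (if eval f x = eval f x' then P x * P x' else 0) := by
      intro f
      have h1 : ∀ y : Fin ℓ → Bool, (Q f y) ^ 2
          = ∑ x, ∑ x', (if eval f x = y then (if eval f x' = y then P x * P x' else 0) else 0) := by
        intro y
        rw [sq, hQdef]
        simp only [Finset.sum_filter]
        rw [Finset.sum_mul_sum]
        refine Finset.sum_congr rfl fun x _ => Finset.sum_congr rfl fun x' _ => ?_
        by_cases h : eval f x = y <;> by_cases h' : eval f x' = y <;> simp [h, h']
      simp_rw [h1]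
      rw [Finset.sum_comm]
      refine Finset.sum_congr rfl fun x _ => ?_
      rw [Finset.sum_comm]
      refine Finset.sum_congr rfl fun x' _ => ?_
      rw [Finset.sum_ite_eq Finset.univ (eval f x)
        (fun y => if eval f x' = y then P x * P x' else 0)]
      simp [eq_comm]
    simp_rw [expand]
    rw [Finset.sum_comm]
    have swap : ∀ x : Fin n → Bool, ∑ f : F, ∑ x', (if eval f x = eval f x' then P x * P x' else 0)
        = ∑ x', P x * P x' *
          ((Finset.univ.filter (fun f : F => eval f x = eval f x')).card : ℝ) := by
      intro x
      rw [Finset.sum_comm]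
      refine Finset.sum_congr rfl fun x' _ => ?_
      rw [Finset.sum_ite, Finset.sum_const, Finset.sum_const]
      simp [mul_comm]
    simp_rw [swap]
    have hterm : ∀ x x' : Fin n → Bool,
        P x * P x' * ((Finset.univ.filter (fun f : F => eval f x = eval f x')).card : ℝ)
        ≤ N * (if x = x' then (P x) ^ 2 else 0) + (N / 2 ^ ℓ) * (P x * P x') := by
      intro x x'
      by_cases hxx : x = x'
      · subst hxx
        have hu : (Finset.univ.filter (fun f : F => eval f x = eval f x)) = Finset.univ := by
          simp
        rw [hu, if_pos rfl, Finset.card_univ]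
        have h2 : (0:ℝ) ≤ (N / 2 ^ ℓ) * (P x * P x) :=
          mul_nonneg (div_pos hN0 hM0).le (mul_nonneg (hP x) (hP x))
        have h3 : P x * P x * ((Fintype.card F : ℝ)) = N * (P x) ^ 2 := by
          rw [← hNdef]; ring
        linarith
      · have hC := htu x x' hxx
        rw [div_le_iff₀ hN0] at hC
        have hPP : (0:ℝ) ≤ P x * P x' := mul_nonneg (hP x) (hP x')
        have hmul := mul_le_mul_of_nonneg_left hC hPP
        rw [if_neg hxx]
        calc P x * P x' * ((Finset.univ.filter (fun f : F => eval f x = eval f x')).card : ℝ)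
            ≤ P x * P x' * (1 / 2 ^ ℓ * N) := hmul
          _ = N * 0 + (N / 2 ^ ℓ) * (P x * P x') := by ring
    calc ∑ x, ∑ x', P x * P x' *
          ((Finset.univ.filter (fun f : F => eval f x = eval f x')).card : ℝ)
        ≤ ∑ x, ∑ x', (N * (if x = x' then (P x) ^ 2 else 0) + (N / 2 ^ ℓ) * (P x * P x')) :=
          Finset.sum_le_sum fun x _ => Finset.sum_le_sum fun x' _ => hterm x x'
      _ = N * (∑ x, (P x) ^ 2) + (N / 2 ^ ℓ) * ((∑ x, P x) * (∑ x', P x')) := by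
          rw [Finset.sum_mul_sum]
          simp_rw [Finset.sum_add_distrib, ← Finset.mul_sum]
          congr 1
          congr 1
          refine Finset.sum_congr rfl fun x _ => ?_
          rw [Finset.sum_ite_eq Finset.univ x (fun _ => (P x) ^ 2)]
          simp
      _ ≤ N * (2:ℝ) ^ (-k) + N / 2 ^ ℓ := by
          rw [hsum]
          have h4 := mul_le_mul_of_nonneg_left hcp hN0.le
          have h5 : (N / 2 ^ ℓ) * ((1:ℝ) * 1) = N / 2 ^ ℓ := by ring
          linarith
  -- variance bound
  have hV : ∑ f : F, ∑ y, ((1 / N) * Q f y - (1 / N) * (1 / 2 ^ ℓ)) ^ 2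
      ≤ (2:ℝ) ^ (-k) / N := by
    have perf : ∀ f : F, ∑ y, ((1 / N) * Q f y - (1 / N) * (1 / 2 ^ ℓ)) ^ 2
        = (1 / N) ^ 2 * (∑ y, (Q f y) ^ 2)
          - (2 * (1 / N) * ((1 / N) * (1 / 2 ^ ℓ))) * 1
          + 2 ^ ℓ * ((1 / N) * (1 / 2 ^ ℓ)) ^ 2 := by
      intro f
      have expand : ∀ y : Fin ℓ → Bool, ((1 / N) * Q f y - (1 / N) * (1 / 2 ^ ℓ)) ^ 2
          = (1 / N) ^ 2 * (Q f y) ^ 2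
            - (2 * (1 / N) * ((1 / N) * (1 / 2 ^ ℓ))) * Q f y
            + ((1 / N) * (1 / 2 ^ ℓ)) ^ 2 := fun y => by ring
      simp_rw [expand]
      rw [Finset.sum_add_distrib, Finset.sum_sub_distrib, ← Finset.mul_sum, ← Finset.mul_sum,
        hQsum f, Finset.sum_const, Finset.card_univ, nsmul_eq_mul, hcardY]
    simp_rw [perf]
    rw [Finset.sum_add_distrib, Finset.sum_sub_distrib, ← Finset.mul_sum, Finset.sum_const,
      Finset.sum_const, Finset.card_univ, nsmul_eq_mul, nsmul_eq_mul, ← hNdef]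
    have h1 : (1 / N) ^ 2 * (∑ f : F, ∑ y, (Q f y) ^ 2)
        ≤ (1 / N) ^ 2 * (N * (2:ℝ) ^ (-k) + N / 2 ^ ℓ) :=
      mul_le_mul_of_nonneg_left hS (by positivity)
    have hid : (1 / N) ^ 2 * (N * (2:ℝ) ^ (-k) + N / 2 ^ ℓ)
        - N * ((2 * (1 / N) * ((1 / N) * (1 / 2 ^ ℓ))) * 1)
        + N * (2 ^ ℓ * ((1 / N) * (1 / 2 ^ ℓ)) ^ 2) = (2:ℝ) ^ (-k) / N := by
      field_simp
      ring
    linarith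
  -- Cauchy–Schwarz
  have hTprod : ∑ p : F × (Fin ℓ → Bool), |(1 / N) * Q p.1 p.2 - (1 / N) * (1 / 2 ^ ℓ)|
      = ∑ f : F, ∑ y, |(1 / N) * Q f y - (1 / N) * (1 / 2 ^ ℓ)| := by
    rw [Fintype.sum_prod_type]
  have hVprod : ∑ p : F × (Fin ℓ → Bool), ((1 / N) * Q p.1 p.2 - (1 / N) * (1 / 2 ^ ℓ)) ^ 2
      = ∑ f : F, ∑ y, ((1 / N) * Q f y - (1 / N) * (1 / 2 ^ ℓ)) ^ 2 := by
    rw [Fintype.sum_prod_type]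
  have hcs := sq_sum_le_card_mul_sum_sq (s := (Finset.univ : Finset (F × (Fin ℓ → Bool))))
      (f := fun p => |(1 / N) * Q p.1 p.2 - (1 / N) * (1 / 2 ^ ℓ)|)
  simp_rw [sq_abs] at hcs
  have hcardP : ((Finset.univ : Finset (F × (Fin ℓ → Bool))).card : ℝ) = N * 2 ^ ℓ := by
    simp [Finset.card_univ, Fintype.card_prod, hcardY, hNdef]
  rw [hcardP, hVprod] at hcs
  have hT2 : (∑ p : F × (Fin ℓ → Bool), |(1 / N) * Q p.1 p.2 - (1 / N) * (1 / 2 ^ ℓ)|) ^ 2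
      ≤ (2:ℝ) ^ ((ℓ:ℝ) - k) := by
    calc (∑ p : F × (Fin ℓ → Bool), |(1 / N) * Q p.1 p.2 - (1 / N) * (1 / 2 ^ ℓ)|) ^ 2
        ≤ (N * 2 ^ ℓ) * ∑ f : F, ∑ y, ((1 / N) * Q f y - (1 / N) * (1 / 2 ^ ℓ)) ^ 2 := hcs
      _ ≤ (N * 2 ^ ℓ) * ((2:ℝ) ^ (-k) / N) :=
          mul_le_mul_of_nonneg_left hV (by positivity)
      _ = (2:ℝ) ^ ((ℓ:ℝ) - k) := by
          rw [sub_eq_add_neg, Real.rpow_add two_pos, Real.rpow_natCast]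
          field_simp
  have hTle : ∑ f : F, ∑ y, |(1 / N) * Q f y - (1 / N) * (1 / 2 ^ ℓ)|
      ≤ Real.sqrt ((2:ℝ) ^ ((ℓ:ℝ) - k)) := by
    rw [← hTprod]
    have hT0 : (0:ℝ) ≤ ∑ p : F × (Fin ℓ → Bool),
        |(1 / N) * Q p.1 p.2 - (1 / N) * (1 / 2 ^ ℓ)| :=
      Finset.sum_nonneg fun p _ => abs_nonneg _
    calc ∑ p : F × (Fin ℓ → Bool), |(1 / N) * Q p.1 p.2 - (1 / N) * (1 / 2 ^ ℓ)|
        = Real.sqrt ((∑ p : F × (Fin ℓ → Bool),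
            |(1 / N) * Q p.1 p.2 - (1 / N) * (1 / 2 ^ ℓ)|) ^ 2) := (Real.sqrt_sq hT0).symm
      _ ≤ Real.sqrt ((2:ℝ) ^ ((ℓ:ℝ) - k)) := Real.sqrt_le_sqrt hT2
  show (1 / 2) * ∑ f : F, ∑ y, |(1 / N) * Q f y - (1 / N) * (1 / 2 ^ ℓ)|
      ≤ (1 / 2) * Real.sqrt ((2:ℝ) ^ ((ℓ:ℝ) - k))
  exact mul_le_mul_of_nonneg_left hTle (by norm_num)
end

section
/- Hoeffding-style bound for sampling without replacement (used in parameter estimation): let x, x̂ ∈ {0,1}^k and let T be a uniformly random subset of {1,…,k} of size t. Let μ = relative Hamming distance between x and x̂ on all of {1,…,k}, and μ_T the relative Hamming distance restricted to T. Then for any ε > 0, Pr[μ ≥ μ_T + ε] ≤ exp(-2ε²t). -/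
lemma hoeffding_scalar (p : ℝ) (hp0 : 0 ≤ p) (hp1 : p ≤ 1) (s : ℝ) (hs : 0 ≤ s) :
    (1 - p) * Real.exp (s * p) + p * Real.exp (-(s * (1 - p))) ≤ Real.exp (s ^ 2 / 8) := by
  set f : ℝ → ℝ := fun u => (1 - p) * Real.exp (u * p) + p * Real.exp (-(u * (1 - p))) with hf_def
  set d : ℝ → ℝ := fun u =>
    (1 - p) * p * Real.exp (u * p) - p * (1 - p) * Real.exp (-(u * (1 - p))) with hd_def
  have e1 : ∀ u : ℝ, HasDerivAt (fun v : ℝ => Real.exp (v * p)) (Real.exp (u * p) * p) u :=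
    fun u => by simpa using ((hasDerivAt_id u).mul_const p).exp
  have e2 : ∀ u : ℝ, HasDerivAt (fun v : ℝ => Real.exp (-(v * (1 - p))))
      (Real.exp (-(u * (1 - p))) * -(1 - p)) u :=
    fun u => by simpa using (((hasDerivAt_id u).mul_const (1 - p)).neg).exp
  have hf : ∀ u : ℝ, HasDerivAt f (d u) u := by
    intro u
    have := ((e1 u).const_mul (1 - p)).add ((e2 u).const_mul p)
    refine this.congr_deriv ?_
    simp [hd_def]; ring
  have hd : ∀ u : ℝ, HasDerivAt d
      ((1 - p) * p * p * Real.exp (u * p) + p * (1 - p) * (1 - p) * Real.exp (-(u * (1 - p)))) u := by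
    intro u
    have := (((e1 u).const_mul ((1 - p) * p)).sub ((e2 u).const_mul (p * (1 - p))))
    refine this.congr_deriv ?_
    ring
  have fpos : ∀ u : ℝ, 0 < f u := by
    intro u
    have hA := Real.exp_pos (u * p)
    have hB := Real.exp_pos (-(u * (1 - p)))
    have h1p : 0 ≤ 1 - p := by linarith
    have hm1 : min (Real.exp (u * p)) (Real.exp (-(u * (1 - p)))) ≤ Real.exp (u * p) :=
      min_le_left _ _
    have hm2 : min (Real.exp (u * p)) (Real.exp (-(u * (1 - p)))) ≤ Real.exp (-(u * (1 - p))) :=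
      min_le_right _ _
    have hm3 : 0 < min (Real.exp (u * p)) (Real.exp (-(u * (1 - p)))) := lt_min hA hB
    simp only [hf_def]
    nlinarith [mul_le_mul_of_nonneg_left hm1 h1p, mul_le_mul_of_nonneg_left hm2 hp0]
  -- key variance identity / bound:  d' * f - d^2 ≤ f^2 / 4
  have key : ∀ u : ℝ,
      ((1 - p) * p * p * Real.exp (u * p) + p * (1 - p) * (1 - p) * Real.exp (-(u * (1 - p)))) * f u
        - d u * d u ≤ f u ^ 2 / 4 := by
    intro u
    set A := Real.exp (u * p)
    set B := Real.exp (-(u * (1 - p)))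
    have hA : 0 < A := Real.exp_pos _
    have hB : 0 < B := Real.exp_pos _
    simp only [hf_def, hd_def]
    nlinarith [sq_nonneg ((1 - p) * A - p * B), sq_nonneg ((1 - p) * A + p * B),
      mul_pos hA hB, sq_nonneg p, sq_nonneg (1 - p)]
  -- g u = u/4 - d u / f u is monotone on ℝ
  set g : ℝ → ℝ := fun u => u / 4 - d u / f u with hg_def
  have hg : ∀ u : ℝ, HasDerivAt g (1 / 4 -
      (((1 - p) * p * p * Real.exp (u * p) + p * (1 - p) * (1 - p) * Real.exp (-(u * (1 - p)))) * f u
        - d u * d u) / f u ^ 2) u := by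
    intro u
    have hq := ((hd u).div (hf u) (ne_of_gt (fpos u)))
    have hu : HasDerivAt (fun v : ℝ => v / 4) (1 / 4) u := by
      simpa using (hasDerivAt_id u).div_const 4
    exact hu.sub hq
  have gmono : Monotone g := by
    apply monotone_of_hasDerivAt_nonneg hg
    intro u
    have h1 := key u
    have h2 : (0:ℝ) < f u ^ 2 := pow_pos (fpos u) 2
    have : (((1 - p) * p * p * Real.exp (u * p) + p * (1 - p) * (1 - p) * Real.exp (-(u * (1 - p)))) * f u
        - d u * d u) / f u ^ 2 ≤ 1 / 4 := by
      rw [div_le_iff₀ h2]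
      nlinarith
    simp only [Pi.le_def, Pi.zero_apply]
    linarith
  have gzero : g 0 = 0 := by
    have hd0 : d 0 = 0 := by simp [hd_def]; ring
    simp [hg_def, hd0]
  have stepA : ∀ u : ℝ, 0 ≤ u → d u / f u ≤ u / 4 := by
    intro u hu
    have := gmono hu
    rw [gzero] at this
    simp only [hg_def] at this
    linarith
  -- h u = u^2/8 - log (f u) is monotone on [0, ∞)
  set h : ℝ → ℝ := fun u => u ^ 2 / 8 - Real.log (f u) with hh_def
  have hh : ∀ u : ℝ, HasDerivAt h (u / 4 - d u / f u) u := by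
    intro u
    have hl : HasDerivAt (fun v => Real.log (f v)) (d u / f u) u :=
      (hf u).log (ne_of_gt (fpos u))
    have hu : HasDerivAt (fun v : ℝ => v ^ 2 / 8) (u / 4) u := by
      have := ((hasDerivAt_pow 2 u).div_const 8)
      refine this.congr_deriv ?_; ring
    exact hu.sub hl
  have hmono : MonotoneOn h (Set.Ici 0) := by
    apply monotoneOn_of_hasDerivWithinAt_nonneg (convex_Ici 0)
      (fun u _ => (hh u).continuousAt.continuousWithinAt)
      (f' := fun u => u / 4 - d u / f u)
      (fun u hu => (hh u).hasDerivWithinAt)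
    intro u hu
    rw [interior_Ici] at hu
    have := stepA u (le_of_lt hu)
    linarith
  have h0 : h 0 = 0 := by simp [hh_def, hf_def]
  have := hmono (Set.self_mem_Ici) (Set.mem_Ici.mpr hs) hs
  rw [h0] at this
  simp only [hh_def] at this
  have hlog : Real.log (f s) ≤ s ^ 2 / 8 := by linarith
  calc f s ≤ Real.exp (Real.log (f s)) := le_of_eq (Real.exp_log (fpos s)).symm
    _ ≤ Real.exp (s ^ 2 / 8) := Real.exp_le_exp.mpr hlog


lemma amgm_pow (a b : ℝ) (ha : 0 ≤ a) (hb : 0 ≤ b) (n : ℕ) :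
    a ^ n * b ≤ (((n : ℝ) * a + b) / (n + 1)) ^ (n + 1) := by
  have hn : (0:ℝ) < (n : ℝ) + 1 := by positivity
  set w₁ : ℝ := (n : ℝ) / ((n : ℝ) + 1) with hw₁_def
  set w₂ : ℝ := 1 / ((n : ℝ) + 1) with hw₂_def
  have hw₁ : 0 ≤ w₁ := by positivity
  have hw₂ : 0 ≤ w₂ := by positivity
  have hw : w₁ + w₂ = 1 := by rw [hw₁_def, hw₂_def]; field_simp
  have h := Real.geom_mean_le_arith_mean2_weighted hw₁ hw₂ ha hb hw
  have hL : 0 ≤ a ^ w₁ * b ^ w₂ :=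
    mul_nonneg (Real.rpow_nonneg ha _) (Real.rpow_nonneg hb _)
  have h2 := pow_le_pow_left₀ hL h (n + 1)
  calc a ^ n * b = (a ^ w₁ * b ^ w₂) ^ (n + 1) := by
        rw [mul_pow, ← Real.rpow_natCast (a ^ w₁) (n+1), ← Real.rpow_natCast (b ^ w₂) (n+1),
          ← Real.rpow_mul ha, ← Real.rpow_mul hb, hw₁_def, hw₂_def]
        push_cast
        rw [div_mul_cancel₀ _ (ne_of_gt hn), div_mul_cancel₀ _ (ne_of_gt hn),
          Real.rpow_natCast, Real.rpow_one]
    _ ≤ (w₁ * a + w₂ * b) ^ (n + 1) := h2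
    _ = (((n : ℝ) * a + b) / (n + 1)) ^ (n + 1) := by
        rw [hw₁_def, hw₂_def]; congr 1; field_simp

lemma step_ineq (k' m n : ℕ) (z : ℝ) (hz0 : 0 ≤ z) (hz1 : z ≤ 1) (hm : m ≤ k') :
    (k'.choose (n+1) : ℝ) * (1 + (z-1) * m / k') ^ (n+1)
      + z * (k'.choose n : ℝ) * (1 + (z-1) * m / k') ^ n
    ≤ ((k'+1).choose (n+1) : ℝ) * (1 + (z-1) * (m+1) / (k'+1)) ^ (n+1) := by
  rcases Nat.lt_or_ge k' n with hkn | hnk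
  · -- all binomials vanish
    have h1 : k'.choose (n+1) = 0 := Nat.choose_eq_zero_of_lt (by omega)
    have h2 : k'.choose n = 0 := Nat.choose_eq_zero_of_lt hkn
    have h3 : (k'+1).choose (n+1) = 0 := Nat.choose_eq_zero_of_lt (by omega)
    simp [h1, h2, h3]
  -- main case : n ≤ k'
  set h : ℝ := 1 + (z-1) * m / k' with hh_def
  set G : ℝ := 1 + (z-1) * (m+1) / (k'+1) with hG_def
  have hk'pos : (0:ℝ) ≤ (k' : ℝ) := Nat.cast_nonneg _
  have hh0 : 0 ≤ h := by
    rcases Nat.eq_zero_or_pos k' with h0 | h0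
    · have hm0 : m = 0 := by omega
      subst hm0; simp [hh_def]
    · have hk : (0:ℝ) < (k' : ℝ) := by exact_mod_cast h0
      have hmk : (m : ℝ) / k' ≤ 1 := by
        rw [div_le_one hk]; exact_mod_cast hm
      have hmk0 : (0:ℝ) ≤ (m : ℝ) / k' := by positivity
      have : (z - 1) * (m / k') ≥ -1 := by nlinarith
      rw [hh_def]; rw [mul_div_assoc]; linarith
  have hb0 : 0 ≤ (((k' : ℝ) - n) * h + (n+1) * z) / (k'+1) := by
    have : (0:ℝ) ≤ (k' : ℝ) - n := by
      have : (n:ℝ) ≤ k' := by exact_mod_cast hnk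
      linarith
    positivity
  set b : ℝ := (((k' : ℝ) - n) * h + (n+1) * z) / (k'+1) with hb_def
  -- binomial identities
  have pascal : ((k'+1).choose (n+1) : ℝ) = (k'.choose n : ℝ) + (k'.choose (n+1) : ℝ) := by
    exact_mod_cast congrArg (Nat.cast (R := ℝ)) (Nat.choose_succ_succ k' n)
  have absorb : ((k' : ℝ) + 1) * (k'.choose n : ℝ) = ((k'+1).choose (n+1) : ℝ) * ((n : ℝ) + 1) := by
    exact_mod_cast congrArg (Nat.cast (R := ℝ)) (Nat.add_one_mul_choose_eq k' n)
  have hN0 : (0:ℝ) ≤ ((k'+1).choose (n+1) : ℝ) := Nat.cast_nonneg _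
  -- LHS = N * h^n * b
  have hkk : (0:ℝ) < (k' : ℝ) + 1 := by positivity
  have hchoose_n : (k'.choose n : ℝ) = ((k'+1).choose (n+1) : ℝ) * ((n:ℝ)+1) / ((k':ℝ)+1) := by
    field_simp
    linarith [absorb]
  have hchoose_n1 : (k'.choose (n+1) : ℝ)
      = ((k'+1).choose (n+1) : ℝ) * (((k':ℝ) - n) / ((k':ℝ)+1)) := by
    have h1 : (k'.choose (n+1):ℝ) = ((k'+1).choose (n+1):ℝ) - (k'.choose n : ℝ) := by
      linarith [pascal]
    rw [h1, hchoose_n]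
    field_simp
    ring
  have hLHS : (k'.choose (n+1) : ℝ) * h ^ (n+1) + z * (k'.choose n : ℝ) * h ^ n
      = ((k'+1).choose (n+1) : ℝ) * (h ^ n * b) := by
    rw [hchoose_n, hchoose_n1, hb_def, pow_succ]
    field_simp
  rw [hLHS]
  -- AM-GM
  have hsum : ((n : ℝ) * h + b) / ((n : ℝ) + 1) = G := by
    rw [hb_def, hG_def, hh_def]
    rcases Nat.eq_zero_or_pos k' with h0 | h0
    · have hm0 : m = 0 := by omega
      have hn0 : n = 0 := by omega
      subst hm0; subst hn0
      have h0' : (k' : ℝ) = 0 := by exact_mod_cast h0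
      rw [h0']
      norm_num
    · have hk : (0:ℝ) ≠ (k' : ℝ) := by
        symm; exact_mod_cast Nat.pos_iff_ne_zero.mp h0
      field_simp
      ring
  have := amgm_pow h b hh0 hb0 n
  rw [hsum] at this
  exact mul_le_mul_of_nonneg_left this hN0

lemma mgf_bound {ι : Type*} [DecidableEq ι] (m : ℕ) :
    ∀ (D S : Finset ι), D ⊆ S → D.card = m → ∀ (t : ℕ) (z : ℝ), 0 ≤ z → z ≤ 1 →
    (∑ T ∈ S.powersetCard t, z ^ (T ∩ D).card)
      ≤ (S.card.choose t : ℝ) * (1 + (z - 1) * m / S.card) ^ t := by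
  induction m with
  | zero =>
    intro D S hDS hD t z hz0 hz1
    have hDempty : D = ∅ := Finset.card_eq_zero.mp hD
    subst hDempty
    apply le_of_eq
    simp [Finset.inter_empty]
  | succ m ih =>
    intro D S hDS hD t z hz0 hz1
    have hDne : D.Nonempty := Finset.card_pos.mp (by omega)
    obtain ⟨d, hd⟩ := hDne
    have hdS : d ∈ S := hDS hd
    set S' := S.erase d with hS'_def
    set D' := D.erase d with hD'_def
    have hScard : S'.card + 1 = S.card := Finset.card_erase_add_one hdS
    have hD'card : D'.card = m := by
      have := Finset.card_erase_add_one hd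
      rw [← hD'_def] at this
      omega
    have hD'S' : D' ⊆ S' := Finset.erase_subset_erase d hDS
    have hmk : m ≤ S'.card := hD'card ▸ Finset.card_le_card hD'S'
    have hdS' : d ∉ S' := Finset.notMem_erase d S
    -- key: for T with d ∉ T, T ∩ D = T ∩ D'
    have hinter : ∀ T : Finset ι, d ∉ T → T ∩ D = T ∩ D' := by
      intro T hdT
      rw [hD'_def, Finset.inter_erase, Finset.erase_eq_of_notMem]
      intro hmem
      exact hdT (Finset.mem_of_mem_inter_left hmem)
    rcases t with _ | n
    · -- t = 0
      apply le_of_eq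
      simp
    -- t = n + 1
    have hins : S = insert d S' := (Finset.insert_erase hdS).symm
    have hsplit : S.powersetCard (n+1)
        = S'.powersetCard (n+1) ∪ (S'.powersetCard n).image (insert d) := by
      conv_lhs => rw [hins]
      exact Finset.powersetCard_succ_insert hdS' n
    have hdisj : Disjoint (S'.powersetCard (n+1)) ((S'.powersetCard n).image (insert d)) := by
      rw [Finset.disjoint_left]
      intro T hT hT'
      have hdT : d ∉ T := fun hdT => hdS' ((Finset.mem_powersetCard.mp hT).1 hdT)
      obtain ⟨T', _, rfl⟩ := Finset.mem_image.mp hT'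
      exact hdT (Finset.mem_insert_self d T')
    have hsum1 : ∑ T ∈ S'.powersetCard (n+1), z ^ (T ∩ D).card
        = ∑ T ∈ S'.powersetCard (n+1), z ^ (T ∩ D').card := by
      apply Finset.sum_congr rfl
      intro T hT
      have hdT : d ∉ T := fun hdT => hdS' ((Finset.mem_powersetCard.mp hT).1 hdT)
      rw [hinter T hdT]
    have hsum2 : ∑ T ∈ (S'.powersetCard n).image (insert d), z ^ (T ∩ D).card
        = z * ∑ T ∈ S'.powersetCard n, z ^ (T ∩ D').card := by
      rw [Finset.sum_image]
      · rw [Finset.mul_sum]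
        apply Finset.sum_congr rfl
        intro T hT
        have hdT : d ∉ T := fun hdT => hdS' ((Finset.mem_powersetCard.mp hT).1 hdT)
        have h1 : insert d T ∩ D = insert d (T ∩ D') := by
          rw [Finset.insert_inter_of_mem hd, hinter T hdT]
        have h2 : d ∉ T ∩ D' := fun hmem => hdT (Finset.mem_of_mem_inter_left hmem)
        rw [h1, Finset.card_insert_of_notMem h2, pow_succ]
        ring
      · intro a ha b hb hab
        have hda : d ∉ a := fun h => hdS' ((Finset.mem_powersetCard.mp ha).1 h)
        have hdb : d ∉ b := fun h => hdS' ((Finset.mem_powersetCard.mp hb).1 h)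
        rw [← Finset.erase_insert hda, ← Finset.erase_insert hdb, hab]
    have hIH1 := ih D' S' hD'S' hD'card (n+1) z hz0 hz1
    have hIH2 := ih D' S' hD'S' hD'card n z hz0 hz1
    calc ∑ T ∈ S.powersetCard (n+1), z ^ (T ∩ D).card
        = ∑ T ∈ S'.powersetCard (n+1), z ^ (T ∩ D').card
          + z * ∑ T ∈ S'.powersetCard n, z ^ (T ∩ D').card := by
          rw [hsplit, Finset.sum_union hdisj, hsum1, hsum2]
      _ ≤ (S'.card.choose (n+1) : ℝ) * (1 + (z - 1) * m / S'.card) ^ (n+1)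
          + z * ((S'.card.choose n : ℝ) * (1 + (z - 1) * m / S'.card) ^ n) := by
          exact add_le_add hIH1 (mul_le_mul_of_nonneg_left hIH2 hz0)
      _ ≤ ((S'.card + 1).choose (n+1) : ℝ)
            * (1 + (z - 1) * ((m : ℝ) + 1) / ((S'.card : ℝ) + 1)) ^ (n+1) := by
          have := step_ineq S'.card m n z hz0 hz1 hmk
          calc _ = (S'.card.choose (n+1) : ℝ) * (1 + (z-1) * m / S'.card) ^ (n+1)
              + z * (S'.card.choose n : ℝ) * (1 + (z-1) * m / S'.card) ^ n := by ring
            _ ≤ _ := this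
      _ = (S.card.choose (n+1) : ℝ) * (1 + (z - 1) * ((m+1 : ℕ) : ℝ) / (S.card : ℝ)) ^ (n+1) := by
          rw [← hScard]
          push_cast
          ring

/-- Hoeffding/Serfling-style bound for sampling without replacement: for a
uniformly random size-`t` subset `T` of `{1,…,k}`, the probability that the
overall relative Hamming distance exceeds the one observed on `T` by `ε` is at
most `exp(-2ε²t)`. -/
theorem sampling_without_replacement_bound (k t : ℕ) (ht : 0 < t) (htk : t ≤ k)
    (x y : Fin k → Bool) (ε : ℝ) (hε : 0 < ε) :
    (((Finset.univ : Finset (Fin k)).powersetCard t).filter (fun T =>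
        ((T.filter (fun i => x i ≠ y i)).card : ℝ) / t + ε ≤
          (hammingDist x y : ℝ) / k)).card /
      ((((Finset.univ : Finset (Fin k)).powersetCard t)).card : ℝ) ≤
      Real.exp (-2 * ε ^ 2 * t) := by
  classical
  set D : Finset (Fin k) := Finset.univ.filter (fun i => x i ≠ y i) with hD_def
  set P : Finset (Finset (Fin k)) := (Finset.univ : Finset (Fin k)).powersetCard t with hP_def
  have hkpos : 0 < k := lt_of_lt_of_le ht htk
  have hkR : (0:ℝ) < (k:ℝ) := by exact_mod_cast hkpos
  have htR : (0:ℝ) < (t:ℝ) := by exact_mod_cast ht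
  have hcardP : P.card = Nat.choose k t := by
    rw [hP_def, Finset.card_powersetCard, Finset.card_univ, Fintype.card_fin]
  have hNpos : (0:ℝ) < (P.card : ℝ) := by
    rw [hcardP]
    exact_mod_cast Nat.choose_pos htk
  have hHam : hammingDist x y = D.card := rfl
  have hmk : D.card ≤ k := by
    have := Finset.card_le_univ D
    rwa [Fintype.card_fin] at this
  set p : ℝ := (D.card : ℝ) / k with hp_def
  have hp0 : 0 ≤ p := by positivity
  have hp1 : p ≤ 1 := by
    rw [hp_def, div_le_one hkR]
    exact_mod_cast hmk
  set s : ℝ := 4 * ε with hs_def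
  have hs0 : 0 ≤ s := by positivity
  set z : ℝ := Real.exp (-s) with hz_def
  have hz0 : 0 ≤ z := (Real.exp_pos _).le
  have hz1 : z ≤ 1 := by
    rw [hz_def, ← Real.exp_zero]
    exact Real.exp_le_exp.mpr (by linarith)
  have hfilter_eq : ∀ T : Finset (Fin k), (T.filter fun i => x i ≠ y i) = T ∩ D := by
    intro T
    ext i
    simp [hD_def]
  -- Step 1 : count bad sets by exponential weights
  have step1 : ((P.filter (fun T =>
        ((T.filter (fun i => x i ≠ y i)).card : ℝ) / t + ε ≤
          (hammingDist x y : ℝ) / k)).card : ℝ)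
      ≤ ∑ T ∈ P, Real.exp (s * ((t:ℝ) * (p - ε) - ((T ∩ D).card : ℝ))) := by
    rw [Finset.cast_card]
    calc ∑ T ∈ P.filter (fun T =>
            ((T.filter (fun i => x i ≠ y i)).card : ℝ) / t + ε ≤
              (hammingDist x y : ℝ) / k), (1:ℝ)
        ≤ ∑ T ∈ P.filter (fun T =>
            ((T.filter (fun i => x i ≠ y i)).card : ℝ) / t + ε ≤
              (hammingDist x y : ℝ) / k),
            Real.exp (s * ((t:ℝ) * (p - ε) - ((T ∩ D).card : ℝ))) := by
          apply Finset.sum_le_sum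
          intro T hT
          have hcond := (Finset.mem_filter.mp hT).2
          rw [hfilter_eq T, hHam] at hcond
          have hj : ((T ∩ D).card : ℝ) ≤ (t:ℝ) * (p - ε) := by
            rw [div_add' _ _ _ (ne_of_gt htR), div_le_div_iff₀ htR hkR] at hcond
            rw [hp_def]
            have h2 : ((T ∩ D).card : ℝ) + ε * t ≤ ((D.card : ℝ) * t) / k :=
              (le_div_iff₀ hkR).mpr hcond
            have h3 : (t:ℝ) * (((D.card : ℝ) / k) - ε) = ((D.card : ℝ) * t) / k - t * ε := by
              field_simp
            linarith
          have : 0 ≤ s * ((t:ℝ) * (p - ε) - ((T ∩ D).card : ℝ)) := by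
            apply mul_nonneg hs0
            linarith
          exact Real.one_le_exp this
      _ ≤ ∑ T ∈ P, Real.exp (s * ((t:ℝ) * (p - ε) - ((T ∩ D).card : ℝ))) := by
          apply Finset.sum_le_sum_of_subset_of_nonneg (Finset.filter_subset _ _)
          intro T _ _
          exact (Real.exp_pos _).le
  -- Step 2 : rewrite weights through the mgf
  have step2 : ∑ T ∈ P, Real.exp (s * ((t:ℝ) * (p - ε) - ((T ∩ D).card : ℝ)))
      = Real.exp (s * (t:ℝ) * (p - ε)) * ∑ T ∈ P, z ^ (T ∩ D).card := by
    rw [Finset.mul_sum]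
    apply Finset.sum_congr rfl
    intro T _
    rw [hz_def, ← Real.exp_nat_mul, ← Real.exp_add]
    congr 1
    ring
  -- Step 3 : mgf bound
  have step3 : ∑ T ∈ P, z ^ (T ∩ D).card
      ≤ (Nat.choose k t : ℝ) * (1 + (z - 1) * (D.card : ℝ) / k) ^ t := by
    have := mgf_bound D.card D Finset.univ (Finset.subset_univ D) rfl t z hz0 hz1
    rwa [Finset.card_univ, Fintype.card_fin] at this
  -- scalar estimate
  set A : ℝ := 1 + (z - 1) * (D.card : ℝ) / k with hA_def
  have hA_eq : A = 1 + (z - 1) * p := by rw [hA_def, hp_def]; ring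
  have hA0 : 0 ≤ A := by
    rw [hA_eq]
    nlinarith
  have hApos0 : 0 ≤ Real.exp (s * p) * A := mul_nonneg (Real.exp_pos _).le hA0
  have key : Real.exp (s * p) * A ≤ Real.exp (s ^ 2 / 8) := by
    have hhs := hoeffding_scalar p hp0 hp1 s hs0
    have hrw : Real.exp (s * p) * z = Real.exp (-(s * (1 - p))) := by
      rw [hz_def, ← Real.exp_add]
      congr 1
      ring
    calc Real.exp (s * p) * A = (1 - p) * Real.exp (s * p) + p * (Real.exp (s * p) * z) := by
          rw [hA_eq]; ring
      _ = (1 - p) * Real.exp (s * p) + p * Real.exp (-(s * (1 - p))) := by rw [hrw]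
      _ ≤ Real.exp (s ^ 2 / 8) := hhs
  have scalar : Real.exp (s * (t:ℝ) * (p - ε)) * A ^ t ≤ Real.exp (-2 * ε ^ 2 * t) := by
    have h1 : Real.exp (s * (t:ℝ) * (p - ε)) * A ^ t
        = Real.exp (-(s * (t:ℝ) * ε)) * (Real.exp (s * p) * A) ^ t := by
      rw [mul_pow, ← Real.exp_nat_mul, ← mul_assoc, ← Real.exp_add]
      congr 2
      ring
    rw [h1]
    calc Real.exp (-(s * (t:ℝ) * ε)) * (Real.exp (s * p) * A) ^ t
        ≤ Real.exp (-(s * (t:ℝ) * ε)) * (Real.exp (s ^ 2 / 8)) ^ t := by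
          apply mul_le_mul_of_nonneg_left _ (Real.exp_pos _).le
          exact pow_le_pow_left₀ hApos0 key t
      _ = Real.exp (-2 * ε ^ 2 * t) := by
          rw [← Real.exp_nat_mul, ← Real.exp_add]
          congr 1
          rw [hs_def]
          ring
  -- put everything together
  rw [div_le_iff₀ hNpos]
  calc ((P.filter (fun T =>
        ((T.filter (fun i => x i ≠ y i)).card : ℝ) / t + ε ≤
          (hammingDist x y : ℝ) / k)).card : ℝ)
      ≤ Real.exp (s * (t:ℝ) * (p - ε)) * ∑ T ∈ P, z ^ (T ∩ D).card := by
        rw [← step2]; exact step1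
    _ ≤ Real.exp (s * (t:ℝ) * (p - ε)) * ((Nat.choose k t : ℝ) * A ^ t) := by
        apply mul_le_mul_of_nonneg_left _ (Real.exp_pos _).le
        rw [hA_def]
        exact step3
    _ = (Real.exp (s * (t:ℝ) * (p - ε)) * A ^ t) * (Nat.choose k t : ℝ) := by ring
    _ ≤ Real.exp (-2 * ε ^ 2 * t) * (Nat.choose k t : ℝ) := by
        apply mul_le_mul_of_nonneg_right scalar
        exact Nat.cast_nonneg _
    _ = Real.exp (-2 * ε ^ 2 * t) * (P.card : ℝ) := by rw [hcardP]
end
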